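/- Let H be a real Hilbert space and g : H → H a monotone single-valued map. If z₁, z₂ : [0,T] → H are differentiable with ż_i(t) = g(Σ_i(t)) where Σ_i(t) = −A z_i(t) + w(t) for a linear self-adjoint positive semi-definite operator A and a common function w, and z₁(0) = z₂(0), then for all t, ⟨A(z₁(t) − z₂(t)), z₁(t) − z₂(t)⟩ ≤ 0, hence A^{1/2}z₁(t) = A^{1/2}z₂(t). -/
import Mathlib


open scoped RealInnerProductSpace

/-- Abstract core of the uniqueness proof (Theorem 4.1): if `g` is monotone,
`ż_i(t) = g(−A z_i(t) + w(t))` with `A` self-adjoint positive semi-definite, and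
`z₁(0) = z₂(0)`, then `⟨A(z₁(t) − z₂(t)), z₁(t) − z₂(t)⟩ ≤ 0` for all `t ≥ 0`; hence any
self-adjoint square root of `A` maps `z₁(t)` and `z₂(t)` to the same point. -/
theorem uniqueness_core_monotone_flow
    {H : Type*} [NormedAddCommGroup H] [InnerProductSpace ℝ H] [CompleteSpace H]
    (g : H → H) (hg : ∀ x y, 0 ≤ ⟪g x - g y, x - y⟫)
    (A : H →L[ℝ] H) (hAsa : IsSelfAdjoint A) (hApos : ∀ v, 0 ≤ ⟪A v, v⟫)
    (w z₁ z₂ : ℝ → H)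
    (h₁ : ∀ t, HasDerivAt z₁ (g (-(A (z₁ t)) + w t)) t)
    (h₂ : ∀ t, HasDerivAt z₂ (g (-(A (z₂ t)) + w t)) t)
    (h0 : z₁ 0 = z₂ 0) :
    ∀ t : ℝ, 0 ≤ t →
      ⟪A (z₁ t - z₂ t), z₁ t - z₂ t⟫ ≤ 0 ∧
      ∀ B : H →L[ℝ] H, IsSelfAdjoint B → B.comp B = A → B (z₁ t) = B (z₂ t) := by
  set z : ℝ → H := fun t => z₁ t - z₂ t with hz
  set d : ℝ → H := fun t => g (-(A (z₁ t)) + w t) - g (-(A (z₂ t)) + w t) with hd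
  have hzder : ∀ t, HasDerivAt z (d t) t := fun t => (h₁ t).sub (h₂ t)
  set φ : ℝ → ℝ := fun t => ⟪A (z t), z t⟫ with hφ
  have hAsym : ∀ x y : H, ⟪A x, y⟫ = ⟪x, A y⟫ :=
    fun x y => (ContinuousLinearMap.isSelfAdjoint_iff_isSymmetric.mp hAsa) x y
  have hφ' : ∀ t, HasDerivAt φ (2 * ⟪A (z t), d t⟫) t := by
    intro t
    have hAz : HasDerivAt (fun s => A (z s)) (A (d t)) t :=
      (A.hasFDerivAt.comp_hasDerivAt t (hzder t))
    have := hAz.inner ℝ (hzder t)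
    have hsym : ⟪A (d t), z t⟫ = ⟪A (z t), d t⟫ := by
      rw [hAsym, real_inner_comm]
    rw [hsym, ← two_mul] at this
    exact this
  have hnonpos : ∀ t, 2 * ⟪A (z t), d t⟫ ≤ 0 := by
    intro t
    have key : ⟪A (z t), d t⟫ = -⟪d t, (-(A (z₁ t)) + w t) - (-(A (z₂ t)) + w t)⟫ := by
      have : (-(A (z₁ t)) + w t) - (-(A (z₂ t)) + w t) = -(A (z t)) := by
        simp [hz, map_sub]; abel
      rw [this, inner_neg_right, real_inner_comm, neg_neg]
    have := hg (-(A (z₁ t)) + w t) (-(A (z₂ t)) + w t)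
    rw [key]
    nlinarith
  have hanti : AntitoneOn φ (Set.Ici (0 : ℝ)) := by
    apply antitoneOn_of_deriv_nonpos (convex_Ici 0)
    · exact fun t _ => ((hφ' t).continuousAt).continuousWithinAt
    · exact fun t _ => (hφ' t).differentiableAt.differentiableWithinAt
    · intro t _
      rw [(hφ' t).deriv]
      exact hnonpos t
  intro t ht
  have hφ0 : φ 0 = 0 := by simp [hφ, hz, h0]
  have hle : φ t ≤ 0 := hφ0 ▸ hanti Set.self_mem_Ici ht ht
  have hge : 0 ≤ φ t := hApos (z t)
  have heq : φ t = 0 := le_antisymm hle hge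
  refine ⟨hle, fun B hB hBA => ?_⟩
  have hBz : ‖B (z t)‖ ^ 2 = 0 := by
    have hBsym : ∀ x y : H, ⟪B x, y⟫ = ⟪x, B y⟫ :=
      fun x y => (ContinuousLinearMap.isSelfAdjoint_iff_isSymmetric.mp hB) x y
    have : ⟪B (z t), B (z t)⟫ = ⟪A (z t), z t⟫ := by
      rw [← hBA, hBsym]
      simp [real_inner_comm]
    rw [← real_inner_self_eq_norm_sq, this]
    exact heq
  have : B (z t) = 0 := by
    have := pow_eq_zero_iff (n := 2) (by norm_num) |>.mp hBz
    exact norm_eq_zero.mp this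
  have : B (z₁ t) - B (z₂ t) = 0 := by rw [← map_sub]; exact this
  exact sub_eq_zero.mp this
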